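/- Let θ_1, ..., θ_N be independent random variables each uniform on [-π, π], and let r_1, ..., r_N, η_1, ..., η_N, C be reals. Then the expectation E[(Σ_{j=1}^N r_j cos(θ_j + η_j) + C)^n] equals Σ over tuples (k, l_1, ..., l_N) with k + l_1 + ... + l_N = n and all l_j even of (n!/k!)·C^k·Π_j (r_j^{l_j}/l_j!)·(1/2^{l_j})·binom(l_j, l_j/2); in particular it is independent of η_1, ..., η_N. -/

import Mathlib

open Real MeasureTheory

/-- Uniform probability measure on `[-π, π]`. -/
noncomputable def uniformPhase : Measure ℝ :=
  (ENNReal.ofReal (2 * π))⁻¹ • (volume.restrict (Set.Icc (-π) π))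

lemma J_rec (l : ℕ) : (∫ x in (-π)..π, cos x ^ (l + 2)) =
    ((l : ℝ) + 1) / ((l : ℝ) + 2) * ∫ x in (-π)..π, cos x ^ l := by
  rw [integral_cos_pow]
  simp [Real.sin_pi]

lemma J_eq (l : ℕ) : (∫ x in (-π)..π, Real.cos x ^ l) =
    if Even l then 2 * π * ((l.choose (l / 2) : ℝ)) / 2 ^ l else 0 := by
  induction l using Nat.strong_induction_on with
  | _ l ih =>
    match l with
    | 0 => simp [two_mul]
    | 1 => simp [Real.sin_pi]
    | (m + 2) =>
      rw [J_rec, ih m (by omega)]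
      have hpar : Even (m + 2) ↔ Even m := by rw [Nat.even_iff, Nat.even_iff]; omega
      by_cases hm : Even m
      · rw [if_pos hm, if_pos (hpar.mpr hm)]
        obtain ⟨a, rfl⟩ := hm
        have h1 : (a + a) / 2 = a := by omega
        have h2 : (a + a + 2) / 2 = a + 1 := by omega
        rw [h1, h2]
        have hc1 : (a + a).choose a = Nat.centralBinom a := by
          rw [Nat.centralBinom, two_mul]
        have hc2 : (a + a + 2).choose (a + 1) = Nat.centralBinom (a + 1) := by
          rw [Nat.centralBinom]; congr 1; ring
        rw [hc1, hc2]
        have key := Nat.succ_mul_centralBinom_succ a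
        have keyR : ((a : ℝ) + 1) * (Nat.centralBinom (a + 1) : ℝ)
            = 2 * (2 * a + 1) * (Nat.centralBinom a : ℝ) := by exact_mod_cast key
        have hcbR : (((a+1).centralBinom : ℝ)) = 2 * (2 * (a:ℝ) + 1) * (a.centralBinom : ℝ) / ((a:ℝ) + 1) := by
          rw [eq_div_iff (by positivity)]
          linear_combination keyR
        rw [hcbR]
        push_cast
        have h2p : (2:ℝ) ^ (a + a) ≠ 0 := by positivity
        have h2p2 : (2:ℝ) ^ (a + a + 2) = 4 * 2 ^ (a + a) := by rw [pow_add]; ring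
        rw [h2p2]
        field_simp
        ring
      · rw [if_neg hm, if_neg (fun h => hm (hpar.mp h)), mul_zero]

instance uniformPhase_prob : IsProbabilityMeasure uniformPhase := by
  constructor
  rw [uniformPhase]
  have h2 : (0:ℝ) < 2 * π := by positivity
  simp [Measure.restrict_apply, Real.volume_Icc]
  rw [show π + π = 2 * π by ring, ← ENNReal.ofReal_ofNat 2, ← ENNReal.ofReal_mul (by norm_num), ENNReal.inv_mul_cancel]
  · simp [ENNReal.ofReal_pos, h2, Real.pi_pos]
  · exact ENNReal.ofReal_ne_top

lemma cos_pow_integrable (c : ℝ) (l : ℕ) :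
    Integrable (fun x => Real.cos (x + c) ^ l) uniformPhase := by
  rw [uniformPhase, integrable_smul_measure]
  · exact (Continuous.integrableOn_Icc (by fun_prop))
  · simp [ENNReal.ofReal_ne_top, ENNReal.mul_eq_top]
  · simp [ENNReal.ofReal_eq_zero]; positivity

lemma cos_pow_integral (c : ℝ) (l : ℕ) :
    (∫ x, Real.cos (x + c) ^ l ∂uniformPhase) =
      if Even l then (1 / 2 ^ l) * ((l.choose (l / 2) : ℝ)) else 0 := by
  rw [uniformPhase, integral_smul_measure]
  rw [MeasureTheory.integral_Icc_eq_integral_Ioc,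
    ← intervalIntegral.integral_of_le (by linarith [pi_pos] : -π ≤ π)]
  have h1 : (∫ x in (-π)..π, Real.cos (x + c) ^ l)
      = ∫ x in (-π + c)..(π + c), Real.cos x ^ l := by
    simpa using intervalIntegral.integral_comp_add_right (a := -π) (b := π)
      (fun x => Real.cos x ^ l) c
  have hper : Function.Periodic (fun x => Real.cos x ^ l) (2 * π) := fun x => by
    simp [Real.cos_add_two_pi]
  have h2 : (∫ x in (-π + c)..(π + c), Real.cos x ^ l) = ∫ x in (-π)..π, Real.cos x ^ l := by
    have := hper.intervalIntegral_add_eq (-π + c) (-π)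
    simpa [show -π + c + 2 * π = π + c by ring, show -π + 2 * π = π by ring] using this
  rw [h1, h2, J_eq]
  have htr : (ENNReal.ofReal (2 * π))⁻¹.toReal = (2 * π)⁻¹ := by
    rw [ENNReal.toReal_inv, ENNReal.toReal_ofReal (by positivity)]
  rw [htr, smul_eq_mul]
  by_cases h : Even l
  · rw [if_pos h, if_pos h]
    have : (2:ℝ) * π ≠ 0 := by positivity
    field_simp
  · rw [if_neg h, if_neg h, mul_zero]

def U : Type := ℝ
instance : MeasurableSpace U := inferInstanceAs (MeasurableSpace ℝ)
noncomputable instance : MeasureSpace U := { volume := uniformPhase }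
instance : IsProbabilityMeasure (volume : Measure U) :=
  inferInstanceAs (IsProbabilityMeasure uniformPhase)

def UR : U → ℝ := fun x => x

lemma prod_cos_integrable (N : ℕ) (η : Fin N → ℝ) (l : Fin N → ℕ) :
    Integrable (fun θ : Fin N → ℝ => ∏ j, Real.cos (θ j + η j) ^ l j)
      (Measure.pi fun _ : Fin N => uniformPhase) := by
  have h : Integrable (fun θ : Fin N → U => ∏ j, Real.cos (UR (θ j) + η j) ^ l j)
      (volume : Measure (Fin N → U)) :=
    Integrable.fintype_prod (f := fun j (x : U) => Real.cos (UR x + η j) ^ l j)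
      (fun j => cos_pow_integrable (η j) (l j))
  exact h

lemma prod_cos_integral (N : ℕ) (η : Fin N → ℝ) (l : Fin N → ℕ) :
    (∫ θ : Fin N → ℝ, ∏ j, Real.cos (θ j + η j) ^ l j
        ∂(Measure.pi fun _ : Fin N => uniformPhase)) =
      ∏ j, ∫ x, Real.cos (x + η j) ^ l j ∂uniformPhase := by
  have h := integral_fintype_prod_eq_prod (𝕜 := ℝ) (ι := Fin N) (E := fun _ => U) (μ := fun _ => (volume : Measure U))
    (fun j (x : U) => Real.cos (UR x + η j) ^ l j)
  exact h

lemma combinat (N n k : ℕ) (hk : k ≤ n) (r : Fin N → ℝ) (C : ℝ) (l : Fin N → ℕ)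
    (hl : ∑ j, l j = n - k) :
    ((n.choose k : ℝ) * (Nat.multinomial Finset.univ l : ℝ) * C ^ k * ∏ j, (r j) ^ (l j)) *
        ∏ j, ((1:ℝ) / 2 ^ (l j) * ((l j).choose (l j / 2) : ℝ)) =
      ((n.factorial : ℝ) / (k.factorial : ℝ)) * C ^ k *
        ∏ j, ((r j) ^ (l j) / ((l j).factorial : ℝ)) * (1 / 2 ^ (l j)) *
          ((l j).choose (l j / 2) : ℝ) := by
  have hmultN := Nat.multinomial_spec (Finset.univ) l
  rw [hl] at hmultN
  have hA : (0:ℝ) < ∏ j, ((l j).factorial : ℝ) := by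
    apply Finset.prod_pos; intro j _; exact_mod_cast (l j).factorial_pos
  have hmultR : (Nat.multinomial Finset.univ l : ℝ)
      = ((n - k).factorial : ℝ) / ∏ j, ((l j).factorial : ℝ) := by
    rw [eq_div_iff hA.ne', mul_comm]
    exact_mod_cast hmultN
  rw [hmultR, Nat.cast_choose ℝ hk]
  simp only [div_eq_mul_inv, one_mul, mul_inv, Finset.prod_mul_distrib, Finset.prod_inv_distrib]
  have hk0 : ((k.factorial : ℝ)) ≠ 0 := by exact_mod_cast k.factorial_ne_zero
  have hnk0 : (((n-k).factorial : ℝ)) ≠ 0 := by exact_mod_cast (n-k).factorial_ne_zero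
  field_simp

theorem ensemble_average_multimode_pow (N : ℕ) (r η : Fin N → ℝ) (C : ℝ) (n : ℕ) :
    (∫ θ : Fin N → ℝ, (∑ j, r j * Real.cos (θ j + η j) + C) ^ n
        ∂(Measure.pi fun _ : Fin N => uniformPhase)) =
      ∑ k ∈ Finset.range (n + 1),
        ∑ l ∈ Fintype.piFinset (fun _ : Fin N => Finset.range (n + 1)),
          if k + ∑ j, l j = n ∧ ∀ j, Even (l j) then
            ((n.factorial : ℝ) / (k.factorial : ℝ)) * C ^ k *
              ∏ j, ((r j) ^ (l j) / ((l j).factorial : ℝ)) * (1 / 2 ^ (l j)) *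
                ((l j).choose (l j / 2) : ℝ)
          else 0 := by
  classical
  have expand : ∀ θ : Fin N → ℝ,
      (∑ j, r j * Real.cos (θ j + η j) + C) ^ n =
      ∑ k ∈ Finset.range (n + 1),
        ∑ l ∈ Finset.piAntidiag (Finset.univ : Finset (Fin N)) (n - k),
          ((n.choose k : ℝ) * (Nat.multinomial Finset.univ l : ℝ) * C ^ k
              * ∏ j, (r j) ^ (l j)) *
            ∏ j, Real.cos (θ j + η j) ^ (l j) := by
    intro θ
    rw [add_comm, add_pow]
    refine Finset.sum_congr rfl fun k hk => ?_
    rw [Finset.sum_pow_eq_sum_piAntidiag, Finset.mul_sum, Finset.sum_mul]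
    refine Finset.sum_congr rfl fun l hl => ?_
    simp only [mul_pow, Finset.prod_mul_distrib]
    ring
  simp only [expand]
  rw [integral_finset_sum _ (fun k _ => integrable_finset_sum _ (fun l _ =>
    (prod_cos_integrable N η l).const_mul _))]
  refine Finset.sum_congr rfl fun k hk => ?_
  rw [integral_finset_sum _ (fun l _ => (prod_cos_integrable N η l).const_mul _)]
  rw [Finset.mem_range] at hk
  have hk' : k ≤ n := by omega
  have hsub : Finset.piAntidiag (Finset.univ : Finset (Fin N)) (n - k) ⊆
      Fintype.piFinset (fun _ : Fin N => Finset.range (n + 1)) := by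
    intro l hl
    rw [Finset.mem_piAntidiag] at hl
    obtain ⟨hs, -⟩ := hl
    rw [Fintype.mem_piFinset]
    intro j
    rw [Finset.mem_range]
    have h1 := Finset.single_le_sum (f := l) (fun i _ => Nat.zero_le _)
      (Finset.mem_univ j)
    have h2 : Finset.univ.sum l = ∑ j, l j := rfl
    omega
  rw [← Finset.sum_subset hsub]
  · refine Finset.sum_congr rfl fun l hl => ?_
    rw [Finset.mem_piAntidiag] at hl
    have hsum : ∑ j, l j = n - k := hl.1
    have hcond : k + ∑ j, l j = n := by omega
    rw [integral_const_mul, prod_cos_integral]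
    by_cases he : ∀ j, Even (l j)
    · rw [if_pos ⟨hcond, he⟩]
      have hprod : (∏ j, ∫ x, Real.cos (x + η j) ^ l j ∂uniformPhase)
          = ∏ j, ((1:ℝ) / 2 ^ (l j) * ((l j).choose (l j / 2) : ℝ)) := by
        refine Finset.prod_congr rfl fun j _ => ?_
        rw [cos_pow_integral, if_pos (he j)]
      rw [hprod]
      exact combinat N n k hk' r C l hsum
    · rw [if_neg (fun h => he h.2)]
      push_neg at he
      obtain ⟨j0, hj0⟩ := he
      have : (∏ j, ∫ x, Real.cos (x + η j) ^ l j ∂uniformPhase) = 0 := by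
        apply Finset.prod_eq_zero (Finset.mem_univ j0)
        rw [cos_pow_integral, if_neg hj0]
      rw [this, mul_zero]
  · intro l hlf hlna
    rw [if_neg]
    rintro ⟨hcond, -⟩
    have h2 : Finset.univ.sum l = ∑ j, l j := rfl
    exact hlna (by
      rw [Finset.mem_piAntidiag]
      exact ⟨by omega, fun i _ => Finset.mem_univ i⟩)
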